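/- arXiv:1710.04824 — 2 statements merged into one kernel-verified Lean document; each statement's English description precedes it below -/
import Mathlib

section
/- Let K be symmetric positive definite, d, m ∈ R^n, d ≠ m, and suppose μ1, μ2 both satisfy (d-m)^T K^{-1}(m-μ) = 1. Then (K + (m-μ1)(m-μ1)^T)^{-1}(d-μ1) = (K + (m-μ2)(m-μ2)^T)^{-1}(d-μ2); i.e., all solutions of the basic equation yield the same (unnormalized) detector vector. -/
/-!
Under the basic equation, `K⁻¹ (d - m)` is already a solution of
`(K + (m - μ)(m - μ)ᵀ) x = d - μ`: the rank-one term contributes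
`((m - μ)ᵀ K⁻¹ (d - m)) (m - μ) = m - μ`, which turns `d - m` into `d - μ`.
Since `K + (m - μ)(m - μ)ᵀ` is positive definite, it is invertible, so the detector
vector equals `K⁻¹ (d - m)` for every solution `μ`.
-/

open Matrix

variable {ι : Type*} [Fintype ι]

theorem Matrix.IsSymm.dotProduct_mulVec_comm {R : Type*} [CommSemiring R] {A : Matrix ι ι R}
    (hA : A.IsSymm) (v w : ι → R) : v ⬝ᵥ (A *ᵥ w) = w ⬝ᵥ (A *ᵥ v) := by
  rw [dotProduct_mulVec, ← mulVec_transpose, hA.eq, dotProduct_comm]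

theorem Matrix.PosDef.add_vecMulVec_self {K : Matrix ι ι ℝ} (hK : K.PosDef) (v : ι → ℝ) :
    (K + vecMulVec v v).PosDef :=
  hK.add_posSemidef (by simpa using posSemidef_vecMulVec_self_star v)

variable [DecidableEq ι]

theorem Matrix.add_vecMulVec_mulVec_inv_mulVec {R : Type*} [CommRing R] {K : Matrix ι ι R}
    (hK : IsUnit K.det) (v w : ι → R) :
    (K + vecMulVec v v) *ᵥ (K⁻¹ *ᵥ w) = w + (v ⬝ᵥ (K⁻¹ *ᵥ w)) • v := by
  rw [add_mulVec, vecMulVec_mulVec, mulVec_mulVec, mul_nonsing_inv _ hK, one_mulVec,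
    op_smul_eq_smul]

theorem Matrix.PosDef.inv_add_vecMulVec_mulVec_eq {K : Matrix ι ι ℝ} (hK : K.PosDef)
    {d m μ : ι → ℝ} (h : (d - m) ⬝ᵥ (K⁻¹ *ᵥ (m - μ)) = 1) :
    (K + vecMulVec (m - μ) (m - μ))⁻¹ *ᵥ (d - μ) = K⁻¹ *ᵥ (d - m) := by
  have hA := hK.add_vecMulVec_self (m - μ)
  have hsymm : K⁻¹.IsSymm := by simpa using hK.inv.isHermitian
  have hsolve : (K + vecMulVec (m - μ) (m - μ)) *ᵥ (K⁻¹ *ᵥ (d - m)) = d - μ := by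
    rw [add_vecMulVec_mulVec_inv_mulVec (K.isUnit_iff_isUnit_det.mp hK.isUnit),
      hsymm.dotProduct_mulVec_comm, h, one_smul, sub_add_sub_cancel]
  rw [← hsolve, mulVec_mulVec, nonsing_inv_mul _ (isUnit_iff_isUnit_det _ |>.mp hA.isUnit),
    one_mulVec]

theorem detector_independent_of_mu_general (n : ℕ) (K : Matrix (Fin n) (Fin n) ℝ)
    (hK : K.PosDef) (d m : Fin n → ℝ) (μ₁ μ₂ : Fin n → ℝ)
    (h1 : (d - m) ⬝ᵥ (K⁻¹ *ᵥ (m - μ₁)) = 1)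
    (h2 : (d - m) ⬝ᵥ (K⁻¹ *ᵥ (m - μ₂)) = 1) :
    (K + vecMulVec (m - μ₁) (m - μ₁))⁻¹ *ᵥ (d - μ₁) =
      (K + vecMulVec (m - μ₂) (m - μ₂))⁻¹ *ᵥ (d - μ₂) := by
  rw [hK.inv_add_vecMulVec_mulVec_eq h1, hK.inv_add_vecMulVec_mulVec_eq h2]

theorem detector_independent_of_mu (n : ℕ) (K : Matrix (Fin n) (Fin n) ℝ)
    (hK : K.PosDef) (d m : Fin n → ℝ) (hdm : d ≠ m) (μ₁ μ₂ : Fin n → ℝ)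
    (h1 : (d - m) ⬝ᵥ (K⁻¹ *ᵥ (m - μ₁)) = 1)
    (h2 : (d - m) ⬝ᵥ (K⁻¹ *ᵥ (m - μ₂)) = 1) :
    (K + vecMulVec (m - μ₁) (m - μ₁))⁻¹ *ᵥ (d - μ₁) =
      (K + vecMulVec (m - μ₂) (m - μ₂))⁻¹ *ᵥ (d - μ₂) :=
  detector_independent_of_mu_general n K hK d m μ₁ μ₂ h1 h2
end

section
/- Let K be symmetric positive definite, d, m ∈ R^n, d ≠ m, and let μ* satisfy the basic equation (d-m)^T K^{-1}(m-μ*) = 1. Then (d-μ*)^T (K + (m-μ*)(m-μ*)^T)^{-1}(d-μ*) = (d-m)^T K^{-1}(d-m) + 1. In particular it is independent of the choice of μ* on the solution hyperplane. -/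
/-!
Write `u = d - m` and `a = m - μ`, so that `d - μ = u + a` and the hyperplane condition reads
`aᵀ K⁻¹ u = 1` (by symmetry of `K⁻¹`). Then `(K + a aᵀ) K⁻¹ u = u + a (aᵀ K⁻¹ u) = u + a`, i.e.
`R_μ⁻¹ (d - μ) = K⁻¹ u`, and `(u + a)ᵀ K⁻¹ u = uᵀ K⁻¹ u + 1`.
-/

open Matrix

namespace Matrix

variable {n α : Type*} [Fintype n]

lemma IsSymm.dotProduct_mulVec_comm_s14 [CommSemiring α] {A : Matrix n n α} (hA : A.IsSymm)
    (x y : n → α) : x ⬝ᵥ (A *ᵥ y) = y ⬝ᵥ (A *ᵥ x) := by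
  rw [dotProduct_mulVec, ← mulVec_transpose, hA.eq, dotProduct_comm]

lemma vecMulVec_mulVec_eq_smul [CommSemiring α] (u v w : n → α) :
    vecMulVec u v *ᵥ w = (v ⬝ᵥ w) • u := by
  rw [vecMulVec_mulVec, op_smul_eq_smul]

variable [DecidableEq n] [CommRing α]

lemma add_vecMulVec_mulVec_inv_mulVec_s14 {A : Matrix n n α} (hA : IsUnit A.det) {u v w : n → α}
    (hvw : v ⬝ᵥ (A⁻¹ *ᵥ w) = 1) : (A + vecMulVec u v) *ᵥ (A⁻¹ *ᵥ w) = w + u := by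
  rw [add_mulVec, mulVec_mulVec, mul_nonsing_inv A hA, one_mulVec, vecMulVec_mulVec_eq_smul,
    hvw, one_smul]

lemma inv_add_vecMulVec_mulVec_add {A : Matrix n n α} (hA : IsUnit A.det) {u v w : n → α}
    (hAuv : IsUnit (A + vecMulVec u v).det) (hvw : v ⬝ᵥ (A⁻¹ *ᵥ w) = 1) :
    (A + vecMulVec u v)⁻¹ *ᵥ (w + u) = A⁻¹ *ᵥ w := by
  rw [← add_vecMulVec_mulVec_inv_mulVec_s14 hA hvw, mulVec_mulVec, nonsing_inv_mul _ hAuv,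
    one_mulVec]

end Matrix

theorem g_value_on_hyperplane_general (n : ℕ) (K : Matrix (Fin n) (Fin n) ℝ)
    (hK : K.PosDef) (d m : Fin n → ℝ) (μ : Fin n → ℝ)
    (hμ : (d - m) ⬝ᵥ (K⁻¹ *ᵥ (m - μ)) = 1) :
    (d - μ) ⬝ᵥ ((K + vecMulVec (m - μ) (m - μ))⁻¹ *ᵥ (d - μ)) =
      (d - m) ⬝ᵥ (K⁻¹ *ᵥ (d - m)) + 1 := by
  have hKinv : K⁻¹.IsSymm := (isHermitian_iff_isSymm.mp hK.isHermitian).inv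
  have hcond : (m - μ) ⬝ᵥ (K⁻¹ *ᵥ (d - m)) = 1 := by rwa [hKinv.dotProduct_mulVec_comm_s14]
  have hR : (K + vecMulVec (m - μ) (m - μ)).PosDef := by
    simpa using hK.add_posSemidef (posSemidef_vecMulVec_self_star (m - μ))
  have hsplit : d - μ = (d - m) + (m - μ) := (sub_add_sub_cancel d m μ).symm
  rw [hsplit, inv_add_vecMulVec_mulVec_add (isUnit_iff_isUnit_det K |>.mp hK.isUnit)
    (isUnit_iff_isUnit_det _ |>.mp hR.isUnit) hcond, add_dotProduct, hcond]

theorem g_value_on_hyperplane (n : ℕ) (K : Matrix (Fin n) (Fin n) ℝ)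
    (hK : K.PosDef) (d m : Fin n → ℝ) (hdm : d ≠ m) (μ : Fin n → ℝ)
    (hμ : (d - m) ⬝ᵥ (K⁻¹ *ᵥ (m - μ)) = 1) :
    (d - μ) ⬝ᵥ ((K + vecMulVec (m - μ) (m - μ))⁻¹ *ᵥ (d - μ)) =
      (d - m) ⬝ᵥ (K⁻¹ *ᵥ (d - m)) + 1 :=
  g_value_on_hyperplane_general n K hK d m μ hμ
end
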